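/- arXiv:2307.01348 — 3 statements merged into one kernel-verified Lean document; each statement's English description precedes it below -/
import Mathlib

section
/- If N is a standard normal random variable, then for every real ψ with |ψ| ≤ 1/4, E[exp(ψ(N² − 1))] ≤ exp(2ψ²). -/
/-!
The moment generating function is explicit: `E[exp(ψ(N² − 1))] = e^{-ψ} / √(1 - 2ψ)` for
`ψ < 1/2`, by completing the Gaussian integral. After squaring, the bound becomes the elementary
inequality `exp(-u - u²) ≤ 1 - u` at `u = 2ψ`, valid for all `u ≤ 1/2`.
-/

open MeasureTheory ProbabilityTheory Real

open scoped NNReal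

lemma integral_exp_mul_sq_gaussianReal {v : ℝ≥0} (hv : v ≠ 0) {t : ℝ} (ht : 2 * t * v < 1) :
    ∫ x, exp (t * x ^ 2) ∂gaussianReal 0 v = (√(1 - 2 * t * v))⁻¹ := by
  have hv' : (0 : ℝ) < v := by positivity
  have hpdf (x : ℝ) : gaussianPDFReal 0 v x * exp (t * x ^ 2)
      = (√(2 * π * v))⁻¹ * exp (-((1 - 2 * t * v) / (2 * v)) * x ^ 2) := by
    rw [gaussianPDFReal, mul_assoc, ← exp_add]
    congr 2
    field_simp
    ring
  simp_rw [integral_gaussianReal_eq_integral_smul hv, smul_eq_mul, hpdf, integral_const_mul,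
    integral_gaussian, div_div_eq_mul_div, sqrt_div' _ (sub_pos.2 ht).le]
  have : 0 < √(2 * π * v) := by positivity
  field_simp

lemma exp_neg_sub_sq_le_one_sub {u : ℝ} (hu : u ≤ 1 / 2) : exp (-u - u ^ 2) ≤ 1 - u := by
  rw [show -u - u ^ 2 = -(u + u ^ 2) by ring, exp_neg, inv_le_iff_one_le_mul₀ (exp_pos _)]
  -- Bound `exp` below by its Taylor polynomial of degree 1 (for `u ≤ 0`) or 2 (for `u ≥ 0`):
  -- the products with `1 - u` are `1 - u³` and `1 - u³ + u²(1 + u)²(1 - u)/2`.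
  rcases le_total u 0 with hu₀ | hu₀
  · nlinarith [add_one_le_exp (u + u ^ 2), mul_nonpos_of_nonneg_of_nonpos (sq_nonneg u) hu₀]
  · nlinarith [quadratic_le_exp_of_nonneg (by positivity : 0 ≤ u + u ^ 2)]

/-- MGF bound for the centered square of a standard normal:
`E[exp(ψ(N² − 1))] ≤ exp(2ψ²)` whenever `|ψ| ≤ 1/4`. -/
theorem mgf_centered_chisq_le
    (ψ : ℝ) (hψ : |ψ| ≤ 1 / 4) :
    ∫ x, Real.exp (ψ * (x ^ 2 - 1)) ∂(gaussianReal 0 1) ≤ Real.exp (2 * ψ ^ 2) := by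
  have hψ' : 2 * ψ ≤ 1 / 2 := by linarith [(abs_le.1 hψ).2]
  have hs : 0 < 1 - 2 * ψ := by linarith
  calc ∫ x, exp (ψ * (x ^ 2 - 1)) ∂gaussianReal 0 1
      = exp (-ψ) * ∫ x, exp (ψ * x ^ 2) ∂gaussianReal 0 1 := by
        simp_rw [← integral_const_mul, ← exp_add]
        ring_nf
    _ = exp (-ψ) / √(1 - 2 * ψ) := by
        rw [integral_exp_mul_sq_gaussianReal one_ne_zero (by push_cast; linarith), div_eq_mul_inv]
        simp
    _ ≤ exp (2 * ψ ^ 2) := by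
      rw [div_le_iff₀ (sqrt_pos.2 hs), ← div_le_iff₀' (exp_pos _), ← exp_sub,
        show -ψ - 2 * ψ ^ 2 = (-(2 * ψ) - (2 * ψ) ^ 2) / 2 by ring, exp_half]
      exact sqrt_le_sqrt (exp_neg_sub_sq_le_one_sub hψ')
end

section
/- Let K : ℝ → ℝ be bounded by K_max, Lipschitz with constant L_K, and supported on [−1,1]. Fix h > 0, n ∈ ℕ, Δ = T/n, t_k = kΔ. Then for any t, t' ∈ [0,T] with |t − t'| ≤ d, Δ·Σ_{k=1}^n |K_h(t_k − t) − K_h(t_k − t')| ≤ C·d/h for a constant C depending only on K and T, where K_h(u) = h^{−1}K(u/h). -/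
/-!
Each summand is at most `L_K |t - t'| / h²` by the Lipschitz bound, and it vanishes unless the
grid point `t_k` lies within `h` of `t` or of `t'`, because `K` is supported on `[-1, 1]`. A window
of length `2h` contains at most `2h/Δ + 1 ≤ 3h/Δ` grid points when `Δ ≤ h`, so at most `6h/Δ`
summands survive, and the weighted sum is at most `Δ · (6h/Δ) · L_K d / h² = 6 L_K d / h`.
-/

open Finset Set

theorem Finset.mul_card_le_of_forall_abs_natCast_mul_sub_le (s : Finset ℕ) {Δ r a : ℝ}
    (hΔ : 0 < Δ) (hr : 0 ≤ r) (hs : ∀ k ∈ s, |(k : ℝ) * Δ - a| ≤ r) :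
    Δ * #s ≤ 2 * r + Δ := by
  rcases s.eq_empty_or_nonempty with rfl | hne
  · simp only [card_empty, Nat.cast_zero, mul_zero]
    linarith
  have hsub : s ⊆ Finset.Icc (s.min' hne) (s.max' hne) := fun k hk =>
    Finset.mem_Icc.2 ⟨s.min'_le k hk, s.le_max' k hk⟩
  have hcard : (#s : ℝ) ≤ (s.max' hne : ℝ) - s.min' hne + 1 := by
    have hIcc := card_le_card hsub
    rw [Nat.card_Icc] at hIcc
    have hmM : s.min' hne ≤ s.max' hne := s.min'_le _ (s.max'_mem hne)
    rw [← Nat.cast_sub hmM, ← Nat.cast_add_one]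
    exact_mod_cast (by omega : #s ≤ s.max' hne - s.min' hne + 1)
  have hmin := abs_le.1 (hs _ (s.min'_mem hne))
  have hmax := abs_le.1 (hs _ (s.max'_mem hne))
  nlinarith

theorem abs_inv_mul_sub_inv_mul_le_of_lipschitz {K : ℝ → ℝ} {L h : ℝ}
    (hlip : ∀ u v, |K u - K v| ≤ L * |u - v|) (hh : 0 < h) (x t t' : ℝ) :
    |h⁻¹ * K ((x - t) / h) - h⁻¹ * K ((x - t') / h)| ≤ L * |t - t'| / h ^ 2 := by
  have harg : |(x - t) / h - (x - t') / h| = |t - t'| / h := by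
    rw [← sub_div, abs_div, abs_of_pos hh, abs_sub_comm]
    ring_nf
  calc |h⁻¹ * K ((x - t) / h) - h⁻¹ * K ((x - t') / h)|
      = h⁻¹ * |K ((x - t) / h) - K ((x - t') / h)| := by
        rw [← mul_sub, abs_mul, abs_of_pos (inv_pos.2 hh)]
    _ ≤ h⁻¹ * (L * (|t - t'| / h)) := by
        rw [← harg]
        exact mul_le_mul_of_nonneg_left (hlip _ _) (inv_nonneg.2 hh.le)
    _ = L * |t - t'| / h ^ 2 := by ring

theorem apply_div_eq_zero_of_lt_abs {K : ℝ → ℝ} (hsupp : ∀ u, u ∉ Icc (-1 : ℝ) 1 → K u = 0)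
    {h y : ℝ} (hh : 0 < h) (hy : h < |y|) : K (y / h) = 0 := by
  refine hsupp _ fun hmem => hy.not_ge ?_
  have := abs_le.2 hmem
  rwa [abs_div, abs_of_pos hh, div_le_one hh] at this

theorem kernel_weight_sum_lipschitz_general
    (K : ℝ → ℝ) (LK T : ℝ) (hLK : 0 < LK) (hT : 0 < T)
    (hlip : ∀ u v, |K u - K v| ≤ LK * |u - v|)
    (hsupp : ∀ u, u ∉ Icc (-1 : ℝ) 1 → K u = 0) :
    ∃ C : ℝ, 0 < C ∧ ∀ (h : ℝ) (n : ℕ), 0 < h → 0 < n → T / n ≤ h →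
      ∀ t t' : ℝ, t ∈ Icc 0 T → t' ∈ Icc 0 T → ∀ d : ℝ, |t - t'| ≤ d →
        (T / n) * ∑ k ∈ Finset.Icc 1 n,
            |h⁻¹ * K ((k * (T / n) - t) / h) - h⁻¹ * K ((k * (T / n) - t') / h)|
          ≤ C * d / h := by
  refine ⟨6 * LK, by positivity, fun h n hh hn hΔh t t' _ _ d hd => ?_⟩
  set Δ := T / n
  have hΔ : 0 < Δ := by positivity
  set near : ℝ → Finset ℕ := fun a => {k ∈ Finset.Icc 1 n | |(k : ℝ) * Δ - a| ≤ h}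
  have hnear (a : ℝ) : Δ * #(near a) ≤ 3 * h := by
    have := (near a).mul_card_le_of_forall_abs_natCast_mul_sub_le hΔ hh.le
      fun k hk => (mem_filter.1 hk).2
    linarith
  have hsupport : ∑ k ∈ Finset.Icc 1 n,
      |h⁻¹ * K ((k * Δ - t) / h) - h⁻¹ * K ((k * Δ - t') / h)| =
      ∑ k ∈ near t ∪ near t', |h⁻¹ * K ((k * Δ - t) / h) - h⁻¹ * K ((k * Δ - t') / h)| := by
    rw [← filter_or]
    refine (sum_filter_of_ne fun k _ hk => ?_).symm
    by_contra! hfar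
    simp [apply_div_eq_zero_of_lt_abs hsupp hh hfar.1, apply_div_eq_zero_of_lt_abs hsupp hh hfar.2] at hk
  have hd0 : 0 ≤ d := (abs_nonneg _).trans hd
  have hterm : LK * |t - t'| / h ^ 2 ≤ LK * d / h ^ 2 := by gcongr
  calc Δ * ∑ k ∈ Finset.Icc 1 n, |h⁻¹ * K ((k * Δ - t) / h) - h⁻¹ * K ((k * Δ - t') / h)|
      ≤ Δ * (#(near t ∪ near t') * (LK * d / h ^ 2)) := by
        rw [hsupport, ← nsmul_eq_mul]
        gcongr
        exact sum_le_card_nsmul _ _ _ fun k _ =>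
          (abs_inv_mul_sub_inv_mul_le_of_lipschitz hlip hh _ t t').trans hterm
    _ ≤ (Δ * #(near t) + Δ * #(near t')) * (LK * d / h ^ 2) := by
        rw [← mul_add, mul_assoc]
        have hunion : (#(near t ∪ near t') : ℝ) ≤ #(near t) + #(near t') := by
          exact_mod_cast Finset.card_union_le _ _
        gcongr
    _ ≤ (3 * h + 3 * h) * (LK * d / h ^ 2) :=
        mul_le_mul_of_nonneg_right (add_le_add (hnear t) (hnear t')) (by positivity)
    _ = 6 * LK * d / h := by field_simp; ring

/-- Lipschitz-in-location bound for kernel weight sums, used in the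
chaining/covering step. `K_h(u) = h⁻¹ K(u/h)`. -/
theorem kernel_weight_sum_lipschitz
    (K : ℝ → ℝ) (Kmax LK T : ℝ) (hKmax : 0 < Kmax) (hLK : 0 < LK) (hT : 0 < T)
    (hbdd : ∀ u, |K u| ≤ Kmax)
    (hlip : ∀ u v, |K u - K v| ≤ LK * |u - v|)
    (hsupp : ∀ u, u ∉ Icc (-1 : ℝ) 1 → K u = 0) :
    ∃ C : ℝ, 0 < C ∧ ∀ (h : ℝ) (n : ℕ), 0 < h → 0 < n → T / n ≤ h →
      ∀ t t' : ℝ, t ∈ Icc 0 T → t' ∈ Icc 0 T → ∀ d : ℝ, |t - t'| ≤ d →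
        (T / n) * ∑ k ∈ Finset.Icc 1 n,
            |h⁻¹ * K ((k * (T / n) - t) / h) - h⁻¹ * K ((k * (T / n) - t') / h)|
          ≤ C * d / h :=
  kernel_weight_sum_lipschitz_general K LK T hLK hT hlip hsupp
end

section
/- Let Σ_t^Y = β(t)Σ_t^F β(t)ᵀ + Σ_t^X be a p×p positive definite matrix, where β(t) is p×k, Σ_t^F is k×k positive definite with eigenvalues bounded above and below, Σ_t^X has eigenvalues bounded above and below by positive constants, and (1/p)β(t)ᵀβ(t) converges to a positive definite matrix with uniformly bounded eigenvalues. Then ‖β(t)ᵀ(Σ_t^Y)^{−1}β(t)‖ is bounded above by a constant independent of p. -/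
/-!
Write `Σ = β Σ^F βᵀ + Σ^X`. For every `u`, `uᵀ Σ u = (βᵀu)ᵀ Σ^F (βᵀu) + uᵀ Σ^X u ≥ c₁ ‖βᵀu‖²`.
Evaluating this at `u = Σ⁻¹ β y` gives `c₁ ‖A y‖² ≤ ⟪y, A y⟫` for `A = βᵀ Σ⁻¹ β`, and then
Cauchy–Schwarz yields `‖A‖ ≤ c₁⁻¹`, whatever the dimension `p`.
-/

open Matrix
open scoped RealInnerProductSpace

theorem ContinuousLinearMap.opNorm_le_inv_of_mul_norm_sq_le_inner {E : Type*}
    [NormedAddCommGroup E] [InnerProductSpace ℝ E] (T : E →L[ℝ] E) {c : ℝ} (hc : 0 < c)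
    (h : ∀ x, c * ‖T x‖ ^ 2 ≤ ⟪x, T x⟫) : ‖T‖ ≤ c⁻¹ := by
  refine T.opNorm_le_bound (inv_nonneg.2 hc.le) fun x ↦ ?_
  have hTx : c * ‖T x‖ ^ 2 ≤ ‖x‖ * ‖T x‖ := (h x).trans (real_inner_le_norm x (T x))
  rcases (norm_nonneg (T x)).eq_or_lt with h0 | h0
  · rw [← h0]; positivity
  · rw [inv_mul_eq_div, le_div_iff₀ hc]
    nlinarith

namespace Matrix

variable {m n : Type*} [Fintype m] [Fintype n]

theorem norm_toEuclideanCLM_le_inv_of_mul_dotProduct_le [DecidableEq n] {A : Matrix n n ℝ}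
    {c : ℝ} (hc : 0 < c) (h : ∀ y, c * (A *ᵥ y ⬝ᵥ A *ᵥ y) ≤ y ⬝ᵥ A *ᵥ y) :
    ‖toEuclideanCLM (𝕜 := ℝ) A‖ ≤ c⁻¹ := by
  refine ContinuousLinearMap.opNorm_le_inv_of_mul_norm_sq_le_inner _ hc fun x ↦ ?_
  rw [inner_toEuclideanCLM, ← real_inner_self_eq_norm_sq, EuclideanSpace.inner_eq_star_dotProduct,
    ofLp_toEuclideanCLM, star_trivial]
  exact h x.ofLp

theorem mul_dotProduct_le_dotProduct_mul_add_mul_transpose (B : Matrix m n ℝ)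
    {F : Matrix n n ℝ} {X : Matrix m m ℝ} (hX : X.PosSemidef) {c : ℝ}
    (hF : ∀ x, c * (x ⬝ᵥ x) ≤ x ⬝ᵥ F *ᵥ x) (u : m → ℝ) :
    c * (Bᵀ *ᵥ u ⬝ᵥ Bᵀ *ᵥ u) ≤ u ⬝ᵥ (B * F * Bᵀ + X) *ᵥ u := by
  have hsplit : u ⬝ᵥ (B * F * Bᵀ + X) *ᵥ u = Bᵀ *ᵥ u ⬝ᵥ F *ᵥ (Bᵀ *ᵥ u) + u ⬝ᵥ X *ᵥ u := by
    rw [add_mulVec, dotProduct_add, ← mulVec_mulVec, ← mulVec_mulVec, dotProduct_mulVec u B,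
      ← mulVec_transpose]
  have hXu : 0 ≤ u ⬝ᵥ X *ᵥ u := by simpa using hX.dotProduct_mulVec_nonneg u
  linarith [hF (Bᵀ *ᵥ u)]

theorem mul_dotProduct_le_transpose_mul_inv_mul [DecidableEq m] (B : Matrix m n ℝ)
    {S : Matrix m m ℝ} (hS : IsUnit S) {c : ℝ}
    (h : ∀ u, c * (Bᵀ *ᵥ u ⬝ᵥ Bᵀ *ᵥ u) ≤ u ⬝ᵥ S *ᵥ u) (y : n → ℝ) :
    c * ((Bᵀ * S⁻¹ * B) *ᵥ y ⬝ᵥ (Bᵀ * S⁻¹ * B) *ᵥ y) ≤ y ⬝ᵥ (Bᵀ * S⁻¹ * B) *ᵥ y := by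
  set w := S⁻¹ *ᵥ (B *ᵥ y)
  have hSw : S *ᵥ w = B *ᵥ y := by
    rw [mulVec_mulVec, mul_nonsing_inv _ ((isUnit_iff_isUnit_det S).1 hS), one_mulVec]
  have hA : (Bᵀ * S⁻¹ * B) *ᵥ y = Bᵀ *ᵥ w := by simp only [w, mulVec_mulVec, Matrix.mul_assoc]
  have hyw : y ⬝ᵥ Bᵀ *ᵥ w = w ⬝ᵥ S *ᵥ w := by
    rw [hSw, dotProduct_mulVec, vecMul_transpose, dotProduct_comm]
  rw [hA, hyw]
  exact h w

end Matrix

theorem beta_inv_sandwich_bounded_general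
    (c₁ c₂ : ℝ) (hc₁ : 0 < c₁) :
    ∃ C : ℝ, 0 < C ∧
      ∀ (p k : ℕ) (hp : 0 < p) (hk : 0 < k)
        (β : Matrix (Fin p) (Fin k) ℝ)
        (SF : Matrix (Fin k) (Fin k) ℝ) (SX : Matrix (Fin p) (Fin p) ℝ),
        SF.PosDef → SX.PosDef →
        (∀ x : Fin k → ℝ, c₁ * (x ⬝ᵥ x) ≤ x ⬝ᵥ (SF *ᵥ x) ∧
            x ⬝ᵥ (SF *ᵥ x) ≤ c₂ * (x ⬝ᵥ x)) →
        (∀ x : Fin p → ℝ, c₁ * (x ⬝ᵥ x) ≤ x ⬝ᵥ (SX *ᵥ x) ∧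
            x ⬝ᵥ (SX *ᵥ x) ≤ c₂ * (x ⬝ᵥ x)) →
        (∀ x : Fin k → ℝ,
            c₁ * (x ⬝ᵥ x) ≤ x ⬝ᵥ (((p : ℝ)⁻¹ • (βᵀ * β)) *ᵥ x) ∧
            x ⬝ᵥ (((p : ℝ)⁻¹ • (βᵀ * β)) *ᵥ x) ≤ c₂ * (x ⬝ᵥ x)) →
        (β * SF * βᵀ + SX).PosDef →
        ‖Matrix.toEuclideanCLM (𝕜 := ℝ)
            (βᵀ * (β * SF * βᵀ + SX)⁻¹ * β)‖ ≤ C := by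
  refine ⟨c₁⁻¹, inv_pos.2 hc₁, fun p k _ _ β SF SX _ hSX hF _ _ hS ↦ ?_⟩
  have hquad := mul_dotProduct_le_dotProduct_mul_add_mul_transpose β hSX.posSemidef
    fun x ↦ (hF x).1
  exact norm_toEuclideanCLM_le_inv_of_mul_dotProduct_le hc₁
    (mul_dotProduct_le_transpose_mul_inv_mul β hS.isUnit hquad)

/-- equation (A.15): under pervasive factors and uniformly bounded
eigenvalues of the factor and idiosyncratic volatility matrices,
`‖βᵀ(Σ^Y)⁻¹β‖` is bounded by a constant independent of the dimension `p`. -/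
theorem beta_inv_sandwich_bounded
    (c₁ c₂ : ℝ) (hc₁ : 0 < c₁) (hc₂ : 0 < c₂) :
    ∃ C : ℝ, 0 < C ∧
      ∀ (p k : ℕ) (hp : 0 < p) (hk : 0 < k)
        (β : Matrix (Fin p) (Fin k) ℝ)
        (SF : Matrix (Fin k) (Fin k) ℝ) (SX : Matrix (Fin p) (Fin p) ℝ),
        SF.PosDef → SX.PosDef →
        (∀ x : Fin k → ℝ, c₁ * (x ⬝ᵥ x) ≤ x ⬝ᵥ (SF *ᵥ x) ∧
            x ⬝ᵥ (SF *ᵥ x) ≤ c₂ * (x ⬝ᵥ x)) →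
        (∀ x : Fin p → ℝ, c₁ * (x ⬝ᵥ x) ≤ x ⬝ᵥ (SX *ᵥ x) ∧
            x ⬝ᵥ (SX *ᵥ x) ≤ c₂ * (x ⬝ᵥ x)) →
        (∀ x : Fin k → ℝ,
            c₁ * (x ⬝ᵥ x) ≤ x ⬝ᵥ (((p : ℝ)⁻¹ • (βᵀ * β)) *ᵥ x) ∧
            x ⬝ᵥ (((p : ℝ)⁻¹ • (βᵀ * β)) *ᵥ x) ≤ c₂ * (x ⬝ᵥ x)) →
        (β * SF * βᵀ + SX).PosDef →
        ‖Matrix.toEuclideanCLM (𝕜 := ℝ)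
            (βᵀ * (β * SF * βᵀ + SX)⁻¹ * β)‖ ≤ C :=
  beta_inv_sandwich_bounded_general c₁ c₂ hc₁
end
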